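/- For the logarithmic mean θ and positive reals s, t, r, the 2×2 symmetric matrix M with M₁₁ = ∂₁θ(s,t)(r−s) + ∂₁θ(t,s)(s−t) + 2θ(t,s), M₁₂ = θ(s,t) + θ(s,r), and M₂₂ = ∂₁θ(s,r)(t−s) + ∂₁θ(r,s)(s−r) + 2θ(r,s) is diagonally dominant, i.e., M₁₁ ≥ M₁₂ ≥ 0 and M₂₂ ≥ M₁₂ ≥ 0. -/

import Mathlib

/-
`θ` is positively homogeneous of degree one and concave, being an average of the weighted
geometric means `s ^ a * t ^ (1 - a)`. Euler's identity turns `M₁₁ - M₁₂` into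
`r ∂₁θ(s,t) + s ∂₂θ(s,t) - θ(r,s)`, which is nonnegative by the tangent-plane inequality of a
concave function; likewise for `M₂₂ - M₁₂`. Concavity is checked under the integral sign,
where it is the weighted AM-GM inequality.
-/

noncomputable def logMean (s t : ℝ) : ℝ := ∫ a in (0:ℝ)..1, s ^ a * t ^ (1 - a)

noncomputable def d1θ (s t : ℝ) : ℝ := deriv (fun u => logMean u t) s

open Real Set intervalIntegral

lemma logMean_comm (s t : ℝ) : logMean s t = logMean t s := by
  have h := integral_comp_sub_left (fun a : ℝ => t ^ a * s ^ (1 - a)) (1 : ℝ) (a := 0) (b := 1)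
  simp only [sub_zero, sub_self, sub_sub_cancel] at h
  rw [logMean, logMean, ← h]
  congr 1 with a
  ring

lemma logMean_nonneg {s t : ℝ} (hs : 0 < s) (ht : 0 < t) : 0 ≤ logMean s t :=
  integral_nonneg zero_le_one fun a _ => by positivity

/-- `∂₁θ`, computed by differentiating under the integral sign. -/
noncomputable def logMeanDeriv (s t : ℝ) : ℝ := ∫ a in (0:ℝ)..1, a * s ^ (a - 1) * t ^ (1 - a)

lemma logMeanDeriv_swap (s t : ℝ) :
    logMeanDeriv t s = ∫ a in (0:ℝ)..1, (1 - a) * s ^ a * t ^ (-a) := by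
  have h := integral_comp_sub_left (fun a : ℝ => (1 - a) * s ^ a * t ^ (-a)) (1 : ℝ) (a := 0) (b := 1)
  simp only [sub_zero, sub_self, sub_sub_cancel] at h
  rw [← h, logMeanDeriv]
  congr 1 with a
  ring_nf

lemma hasDerivAt_logMean {s t : ℝ} (hs : 0 < s) (ht : 0 < t) :
    HasDerivAt (fun u => logMean u t) (logMeanDeriv s t) s := by
  have hs2 : 0 < s / 2 := half_pos hs
  refine (intervalIntegral.hasDerivAt_integral_of_dominated_loc_of_deriv_le
    (F' := fun x a => a * x ^ (a - 1) * t ^ (1 - a))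
    (bound := fun a => (s / 2) ^ (a - 1) * t ^ (1 - a))
    (Ioi_mem_nhds (half_lt_self hs)) ?_ ?_ ?_ ?_ ?_ ?_).2
  · filter_upwards [Ioi_mem_nhds hs] with x (hx : 0 < x)
    exact (by fun_prop (disch := positivity) : Continuous fun a : ℝ => x ^ a * t ^ (1 - a))
      |>.aestronglyMeasurable
  · exact (by fun_prop (disch := positivity) : Continuous fun a : ℝ => s ^ a * t ^ (1 - a))
      |>.intervalIntegrable 0 1
  · exact (by fun_prop (disch := positivity) :
      Continuous fun a : ℝ => a * s ^ (a - 1) * t ^ (1 - a)).aestronglyMeasurable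
  · refine .of_forall fun a ha x (hx : s / 2 < x) => ?_
    rw [uIoc_of_le zero_le_one] at ha
    have hx0 : 0 < x := hs2.trans hx
    rw [Real.norm_of_nonneg (by have := ha.1.le; positivity)]
    have hxa : x ^ (a - 1) ≤ (s / 2) ^ (a - 1) :=
      rpow_le_rpow_of_nonpos hs2 hx.le (by linarith [ha.2])
    calc a * x ^ (a - 1) * t ^ (1 - a) ≤ 1 * (s / 2) ^ (a - 1) * t ^ (1 - a) := by
          gcongr
          exact ha.2
      _ = (s / 2) ^ (a - 1) * t ^ (1 - a) := by rw [one_mul]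
  · exact (by fun_prop (disch := positivity) :
      Continuous fun a : ℝ => (s / 2) ^ (a - 1) * t ^ (1 - a)).intervalIntegrable 0 1
  · refine .of_forall fun a _ x (hx : s / 2 < x) => ?_
    exact (hasDerivAt_rpow_const (Or.inl (hs2.trans hx).ne')).mul_const _

lemma d1θ_eq_logMeanDeriv {s t : ℝ} (hs : 0 < s) (ht : 0 < t) : d1θ s t = logMeanDeriv s t :=
  (hasDerivAt_logMean hs ht).deriv

lemma mul_logMeanDeriv_add_mul_logMeanDeriv {s t : ℝ} (hs : 0 < s) (ht : 0 < t) (u v : ℝ) :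
    u * logMeanDeriv s t + v * logMeanDeriv t s =
      ∫ a in (0:ℝ)..1, s ^ a * t ^ (1 - a) * (a * (u / s) + (1 - a) * (v / t)) := by
  rw [logMeanDeriv_swap s t, logMeanDeriv, ← integral_const_mul, ← integral_const_mul,
    ← integral_add]
  · congr 1 with a
    rw [rpow_sub_one hs.ne', show -a = (1 - a) - 1 by ring, rpow_sub_one ht.ne']
    field_simp
  all_goals exact Continuous.intervalIntegrable (by fun_prop (disch := positivity)) 0 1

lemma mul_logMeanDeriv_add_mul_logMeanDeriv_self {s t : ℝ} (hs : 0 < s) (ht : 0 < t) :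
    s * logMeanDeriv s t + t * logMeanDeriv t s = logMean s t := by
  rw [mul_logMeanDeriv_add_mul_logMeanDeriv hs ht, logMean]
  congr 1 with a
  field_simp
  ring

lemma logMean_le_mul_logMeanDeriv_add_mul_logMeanDeriv {s t u v : ℝ} (hs : 0 < s) (ht : 0 < t)
    (hu : 0 < u) (hv : 0 < v) : logMean u v ≤ u * logMeanDeriv s t + v * logMeanDeriv t s := by
  rw [mul_logMeanDeriv_add_mul_logMeanDeriv hs ht]
  refine integral_mono_on zero_le_one
    (Continuous.intervalIntegrable (by fun_prop (disch := positivity)) 0 1)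
    (Continuous.intervalIntegrable (by fun_prop (disch := positivity)) 0 1) fun a ha => ?_
  calc u ^ a * v ^ (1 - a) = s ^ a * t ^ (1 - a) * ((u / s) ^ a * (v / t) ^ (1 - a)) := by
        rw [div_rpow hu.le hs.le, div_rpow hv.le ht.le]
        field_simp
    _ ≤ s ^ a * t ^ (1 - a) * (a * (u / s) + (1 - a) * (v / t)) := by
        gcongr
        exact geom_mean_le_arith_mean2_weighted ha.1 (sub_nonneg.2 ha.2) (by positivity)
          (by positivity) (add_sub_cancel _ _)

/-- The 2×2 matrix arising in the pointwise off-diagonal estimate is diagonally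
dominant: `M₁₁ ≥ M₁₂ ≥ 0` and `M₂₂ ≥ M₁₂ ≥ 0`. -/
theorem pointwise_matrix_diag_dominant (s t r : ℝ) (hs : 0 < s) (ht : 0 < t) (hr : 0 < r) :
    (d1θ s t * (r - s) + d1θ t s * (s - t) + 2 * logMean t s ≥ logMean s t + logMean s r)
    ∧ (logMean s t + logMean s r ≥ 0)
    ∧ (d1θ s r * (t - s) + d1θ r s * (s - r) + 2 * logMean r s ≥ logMean s t + logMean s r) := by
  rw [d1θ_eq_logMeanDeriv hs ht, d1θ_eq_logMeanDeriv ht hs, d1θ_eq_logMeanDeriv hs hr,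
    d1θ_eq_logMeanDeriv hr hs]
  have euler_st := mul_logMeanDeriv_add_mul_logMeanDeriv_self hs ht
  have euler_sr := mul_logMeanDeriv_add_mul_logMeanDeriv_self hs hr
  have tangent_st := logMean_le_mul_logMeanDeriv_add_mul_logMeanDeriv hs ht hr hs
  have tangent_sr := logMean_le_mul_logMeanDeriv_add_mul_logMeanDeriv hs hr ht hs
  have := logMean_nonneg hs ht
  have := logMean_nonneg hs hr
  have := logMean_comm s t
  have := logMean_comm s r
  exact ⟨by linarith, by linarith, by linarith⟩
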